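/- arXiv:2402.15004 — 6 statements merged into one kernel-verified Lean document; each statement's English description precedes it below -/
import Mathlib

section
/- Theorem 1 (exact case). Fix α ∈ (0,1). Suppose that for every θ ∈ Θ the inequality ℙ(T(U, θ) ∈ B_α(θ)) ≥ α holds (in particular at θ₀). Let Y = G(θ₀, U) and assume the event {ω ∈ Ω : θ₀ ∈ Γ_α(G(θ₀, U(ω)))} is measurable. Then ℙ(θ₀ ∈ Γ_α(Y)) ≥ α; that is, the repro samples set Γ_α(Y) is a level-α confidence set for θ₀. -/
open MeasureTheory

/-- Theorem 1 (exact case): the repro samples set `Γ_α` is a level-α confidence set. -/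
theorem repro_samples_coverage
    {Ω 𝒰 Θ 𝒴 𝒯 : Type*} [MeasurableSpace Ω]
    (ℙ : Measure Ω) [IsProbabilityMeasure ℙ]
    (U : Ω → 𝒰) (G : Θ → 𝒰 → 𝒴) (T : 𝒰 → Θ → 𝒯)
    (B : Θ → Set 𝒯) (θ₀ : Θ) (α : ℝ) (hα : α ∈ Set.Ioo (0:ℝ) 1)
    (hB : ∀ θ : Θ, ENNReal.ofReal α ≤ ℙ {ω | T (U ω) θ ∈ B θ})
    (Γ : 𝒴 → Set Θ)
    (hΓ : ∀ y, Γ y = {θ | ∃ u : 𝒰, y = G θ u ∧ T u θ ∈ B θ})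
    (hmeas : MeasurableSet {ω | θ₀ ∈ Γ (G θ₀ (U ω))}) :
    ENNReal.ofReal α ≤ ℙ {ω | θ₀ ∈ Γ (G θ₀ (U ω))} := by
  refine le_trans (hB θ₀) (measure_mono ?_)
  intro ω hω
  simp only [Set.mem_setOf_eq, hΓ]
  exact ⟨U ω, rfl, hω⟩
end

section
/- Theorem 2 (exact case). Let g : 𝒴 × Θ × 𝒰 → ℝ^s be a given function, and suppose the generalized generative relation g(Y(ω), θ₀, U(ω)) = 0 holds for every ω ∈ Ω, where Y : Ω → 𝒴 is the data map. For α ∈ (0,1) define Γ_α(y) = {θ ∈ Θ : ∃ u* ∈ 𝒰 with g(y, θ, u*) = 0 and T(u*, θ) ∈ B_α(θ)}. If ℙ(T(U, θ) ∈ B_α(θ)) ≥ α for every θ ∈ Θ, and the event {ω : θ₀ ∈ Γ_α(Y(ω))} is measurable, then ℙ(θ₀ ∈ Γ_α(Y)) ≥ α. -/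
open MeasureTheory

/-- Theorem 2 (exact case): coverage for the repro samples set under a generalized
generative relation `g(Y, θ₀, U) = 0`. -/
theorem repro_samples_coverage_generalized
    {Ω 𝒰 Θ 𝒴 𝒯 : Type*} [MeasurableSpace Ω]
    (ℙ : Measure Ω) [IsProbabilityMeasure ℙ]
    (U : Ω → 𝒰) (Y : Ω → 𝒴) (θ₀ : Θ)
    (s : ℕ) (g : 𝒴 → Θ → 𝒰 → (Fin s → ℝ))
    (hgen : ∀ ω : Ω, g (Y ω) θ₀ (U ω) = 0)
    (T : 𝒰 → Θ → 𝒯) (B : Θ → Set 𝒯)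
    (α : ℝ) (hα : α ∈ Set.Ioo (0:ℝ) 1)
    (hB : ∀ θ : Θ, ENNReal.ofReal α ≤ ℙ {ω | T (U ω) θ ∈ B θ})
    (Γ : 𝒴 → Set Θ)
    (hΓ : ∀ y, Γ y = {θ | ∃ u : 𝒰, g y θ u = 0 ∧ T u θ ∈ B θ})
    (hmeas : MeasurableSet {ω | θ₀ ∈ Γ (Y ω)}) :
    ENNReal.ofReal α ≤ ℙ {ω | θ₀ ∈ Γ (Y ω)} := by
  refine le_trans (hB θ₀) (measure_mono ?_)
  intro ω hω
  rw [Set.mem_setOf_eq, hΓ]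
  exact ⟨U ω, hgen ω, hω⟩
end

section
/- Lemma 1 (profile nuclear mapping is dominated by Uniform(0,1)). Write θ = (η, β) ∈ Θ for a fixed parameter value and suppose the family {Γ_{α′}}_{α′∈(0,1)} satisfies ℙ(θ ∈ Γ_{α′}(G(θ, U))) ≥ α′ for every α′ ∈ (0,1). For u ∈ 𝒰 and any β̃ with (η, β̃) ∈ Θ define ν(u; η, β, β̃) = inf{α′ ∈ (0,1) : (η, β̃) ∈ Γ_{α′}(G((η, β), u))} (convention: inf over the empty set equals 1), and define the profile nuclear mapping T_p(u, θ) = inf_{β̃ : (η, β̃) ∈ Θ} ν(u; η, β, β̃). Then for every α ∈ (0,1), ℙ(T_p(U, θ) ≤ α) ≥ α (assuming the event is measurable). -/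
open MeasureTheory

/-- Lemma 1: the profile nuclear mapping `T_p(U, θ)` is stochastically dominated by a
Uniform(0,1) random variable: `ℙ(T_p(U, θ) ≤ α) ≥ α` for all `α ∈ (0,1)`.
Conventions: the infimum over the empty set in `ν` equals 1, implemented by adjoining
`{1}`; the profile is an infimum over all nuisance values `β̃` with `(η, β̃) ∈ Θ`. -/
theorem profile_nuclear_dominated
    {Ω 𝒰 H 𝓑 𝒴 : Type*} [MeasurableSpace Ω]
    (ℙ : Measure Ω) [IsProbabilityMeasure ℙ]
    (U : Ω → 𝒰) (Θ : Set (H × 𝓑)) (G : H × 𝓑 → 𝒰 → 𝒴)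
    (Γ : ℝ → 𝒴 → Set (H × 𝓑))
    (η : H) (β : 𝓑) (hθ : (η, β) ∈ Θ)
    (hcov : ∀ α' ∈ Set.Ioo (0:ℝ) 1,
      ENNReal.ofReal α' ≤ ℙ {ω | (η, β) ∈ Γ α' (G (η, β) (U ω))})
    (ν : 𝒰 → H → 𝓑 → 𝓑 → ℝ)
    (hν : ∀ u βt, ν u η β βt =
      sInf ({a | a ∈ Set.Ioo (0:ℝ) 1 ∧ (η, βt) ∈ Γ a (G (η, β) u)} ∪ {1}))
    (Tp : 𝒰 → H × 𝓑 → ℝ)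
    (hTp : ∀ u, Tp u (η, β) = sInf {r | ∃ βt : 𝓑, (η, βt) ∈ Θ ∧ r = ν u η β βt})
    (α : ℝ) (hα : α ∈ Set.Ioo (0:ℝ) 1)
    (hmeas : MeasurableSet {ω | Tp (U ω) (η, β) ≤ α}) :
    ENNReal.ofReal α ≤ ℙ {ω | Tp (U ω) (η, β) ≤ α} := by
  obtain ⟨hα0, hα1⟩ := hα
  -- the sets defining ν are bounded below by 0
  have hbdd : ∀ u βt, ∀ x ∈ ({a | a ∈ Set.Ioo (0:ℝ) 1 ∧ (η, βt) ∈ Γ a (G (η, β) u)} ∪ {1}),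
      (0:ℝ) ≤ x := by
    rintro u βt x (⟨⟨hx0, _⟩, _⟩ | hx1)
    · exact le_of_lt hx0
    · simp only [Set.mem_singleton_iff] at hx1
      rw [hx1]; norm_num
  -- every ν value is nonnegative
  have hν_nonneg : ∀ u βt, 0 ≤ ν u η β βt := by
    intro u βt
    rw [hν]
    exact Real.sInf_nonneg (hbdd u βt)
  -- key step: for α' ∈ (0, α), the coverage event is included in the target event
  have key : ∀ α' : ℝ, 0 < α' → α' < α →
      ENNReal.ofReal α' ≤ ℙ {ω | Tp (U ω) (η, β) ≤ α} := by
    intro α' hα'0 hα'α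
    have hα'1 : α' < 1 := lt_trans hα'α hα1
    refine le_trans (hcov α' ⟨hα'0, hα'1⟩) (measure_mono ?_)
    intro ω hω
    simp only [Set.mem_setOf_eq] at hω ⊢
    have hν_le : ν (U ω) η β β ≤ α' := by
      rw [hν]
      exact csInf_le ⟨0, hbdd (U ω) β⟩ (Or.inl ⟨⟨hα'0, hα'1⟩, hω⟩)
    have hTp_le : Tp (U ω) (η, β) ≤ ν (U ω) η β β := by
      rw [hTp]
      refine csInf_le ⟨0, ?_⟩ ⟨β, hθ, rfl⟩
      rintro x ⟨βt, _, rfl⟩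
      exact hν_nonneg _ _
    exact le_of_lt (lt_of_le_of_lt (le_trans hTp_le hν_le) hα'α)
  -- take the supremum over α' < α
  refine le_of_forall_lt fun c hc => ?_
  have hc_top : c ≠ ⊤ := ne_top_of_lt hc
  have hc_real : c.toReal < α := (ENNReal.lt_ofReal_iff_toReal_lt hc_top).mp hc
  have hc0 : (0:ℝ) ≤ c.toReal := ENNReal.toReal_nonneg
  set α' := (c.toReal + α) / 2 with hα'def
  have hα'0 : 0 < α' := by rw [hα'def]; linarith
  have hα'α : α' < α := by rw [hα'def]; linarith
  have hcα' : c.toReal < α' := by rw [hα'def]; linarith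
  calc c = ENNReal.ofReal c.toReal := (ENNReal.ofReal_toReal hc_top).symm
    _ < ENNReal.ofReal α' := (ENNReal.ofReal_lt_ofReal_iff_of_nonneg hc0).mpr hcα'
    _ ≤ _ := key α' hα'0 hα'α
end

section
/- Theorem 3 (coverage of the profile repro samples confidence set for the target parameter). Let θ₀ = (η₀, β₀) ∈ Θ be the true parameter and Y = G(θ₀, U). Let T_p be the profile nuclear mapping of Lemma 1 built from a family {Γ_{α′}}_{α′∈(0,1)} satisfying ℙ(θ₀ ∈ Γ_{α′}(G(θ₀, U))) ≥ α′ for every α′ ∈ (0,1). For α ∈ (0,1) define Ξ_α(y) = {η : there exist u* ∈ 𝒰 and β with (η, β) ∈ Θ such that y = G((η, β), u*) and T_p(u*, (η, β)) ≤ α}. Then ℙ(η₀ ∈ Ξ_α(Y)) ≥ α (assuming the event is measurable). -/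
open MeasureTheory

/-- Theorem 3: coverage of the profile repro samples confidence set `Ξ_α` for the
target parameter `η₀`, in the presence of nuisance parameters `β`. -/
theorem profile_target_coverage
    {Ω 𝒰 H 𝓑 𝒴 : Type*} [MeasurableSpace Ω]
    (ℙ : Measure Ω) [IsProbabilityMeasure ℙ]
    (U : Ω → 𝒰) (Θ : Set (H × 𝓑)) (G : H × 𝓑 → 𝒰 → 𝒴)
    (Γ : ℝ → 𝒴 → Set (H × 𝓑))
    (η₀ : H) (β₀ : 𝓑) (hθ₀ : (η₀, β₀) ∈ Θ)
    (hcov : ∀ α' ∈ Set.Ioo (0:ℝ) 1,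
      ENNReal.ofReal α' ≤ ℙ {ω | (η₀, β₀) ∈ Γ α' (G (η₀, β₀) (U ω))})
    (ν : 𝒰 → H → 𝓑 → 𝓑 → ℝ)
    (hν : ∀ u η β βt, ν u η β βt =
      sInf ({a | a ∈ Set.Ioo (0:ℝ) 1 ∧ (η, βt) ∈ Γ a (G (η, β) u)} ∪ {1}))
    (Tp : 𝒰 → H × 𝓑 → ℝ)
    (hTp : ∀ u η β, Tp u (η, β) = sInf {r | ∃ βt : 𝓑, (η, βt) ∈ Θ ∧ r = ν u η β βt})
    (α : ℝ) (hα : α ∈ Set.Ioo (0:ℝ) 1)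
    (Ξ : 𝒴 → Set H)
    (hΞ : ∀ y, Ξ y =
      {η | ∃ (u : 𝒰) (β : 𝓑), (η, β) ∈ Θ ∧ y = G (η, β) u ∧ Tp u (η, β) ≤ α})
    (hmeas : MeasurableSet {ω | η₀ ∈ Ξ (G (η₀, β₀) (U ω))}) :
    ENNReal.ofReal α ≤ ℙ {ω | η₀ ∈ Ξ (G (η₀, β₀) (U ω))} := by
  refine le_trans (hcov α hα) (measure_mono ?_)
  intro ω hω
  simp only [Set.mem_setOf_eq] at hω ⊢
  rw [hΞ]
  refine ⟨U ω, β₀, hθ₀, rfl, ?_⟩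
  -- ν (U ω) η₀ β₀ β₀ ≤ α
  have hν_le : ν (U ω) η₀ β₀ β₀ ≤ α := by
    rw [hν]
    refine csInf_le ⟨0, ?_⟩ (Or.inl ⟨hα, hω⟩)
    rintro x (⟨⟨hx, _⟩, _⟩ | hx)
    · exact le_of_lt hx
    · simp only [Set.mem_singleton_iff] at hx; simp [hx]
  -- each element of the Tp set is nonneg, so it's bddBelow
  have hbdd : BddBelow {r | ∃ βt : 𝓑, (η₀, βt) ∈ Θ ∧ r = ν (U ω) η₀ β₀ βt} := by
    refine ⟨0, ?_⟩
    rintro r ⟨βt, _, rfl⟩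
    rw [hν]
    refine le_csInf ⟨1, Or.inr rfl⟩ ?_
    rintro x (⟨⟨hx, _⟩, _⟩ | hx)
    · exact le_of_lt hx
    · simp only [Set.mem_singleton_iff] at hx; simp [hx]
  rw [hTp]
  exact le_trans (csInf_le hbdd ⟨β₀, hθ₀, rfl⟩) hν_le
end

section
/- Corollary 3 of Section 4 (abstract form of cor:mix4_new: coverage of the profile confidence set for the number of components). Let Y : Ω → 𝒴 be the data, generated under a true parameter whose components include a true label τ₀ ∈ 𝒯 and a true nuisance M₀ ∈ ℳ. Let T̃ : 𝒴 × (𝒯 × ℳ) → 𝒮 be a statistic and {B_{α′}}_{α′∈(0,1)} a family of subsets of 𝒮 such that ℙ(T̃(Y, (τ₀, M₀)) ∈ B_{α′}) ≥ α′ for every α′ ∈ (0,1). Define T̃_p(y, τ) = inf_{M ∈ ℳ} inf{α′ ∈ (0,1) : T̃(y, (τ, M)) ∈ B_{α′}} (convention: the inner infimum over the empty set equals 1), and Ξ_α(y) = {τ ∈ 𝒯 : T̃_p(y, τ) ≤ α}. Then for every α ∈ (0,1), ℙ(τ₀ ∈ Ξ_α(Y)) ≥ α (assuming the event is measurable). 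-/
open MeasureTheory

/-- Corollary 3 of Section 4 (abstract form): coverage of the profile confidence set
`Ξ_α(y) = {τ : T̃_p(y, τ) ≤ α}` for the true label `τ₀`, where
`T̃_p(y, τ) = inf_M inf{α′ ∈ (0,1) : T̃(y, (τ, M)) ∈ B_{α′}}` (inner infimum over the
empty set equals 1, implemented by adjoining `{1}`). -/
theorem profile_label_coverage
    {Ω 𝒴 𝒯 ℳ 𝒮 : Type*} [MeasurableSpace Ω]
    (ℙ : Measure Ω) [IsProbabilityMeasure ℙ]
    (Y : Ω → 𝒴) (τ₀ : 𝒯) (M₀ : ℳ)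
    (Tt : 𝒴 → 𝒯 × ℳ → 𝒮) (B : ℝ → Set 𝒮)
    (hcov : ∀ α' ∈ Set.Ioo (0:ℝ) 1,
      ENNReal.ofReal α' ≤ ℙ {ω | Tt (Y ω) (τ₀, M₀) ∈ B α'})
    (Tp : 𝒴 → 𝒯 → ℝ)
    (hTp : ∀ y τ, Tp y τ = sInf {r | ∃ M : ℳ,
      r = sInf ({a | a ∈ Set.Ioo (0:ℝ) 1 ∧ Tt y (τ, M) ∈ B a} ∪ {1})})
    (Ξ : ℝ → 𝒴 → Set 𝒯)
    (hΞ : ∀ a y, Ξ a y = {τ | Tp y τ ≤ a})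
    (α : ℝ) (hα : α ∈ Set.Ioo (0:ℝ) 1)
    (hmeas : MeasurableSet {ω | τ₀ ∈ Ξ α (Y ω)}) :
    ENNReal.ofReal α ≤ ℙ {ω | τ₀ ∈ Ξ α (Y ω)} := by
  have hsub : {ω | Tt (Y ω) (τ₀, M₀) ∈ B α} ⊆ {ω | τ₀ ∈ Ξ α (Y ω)} := by
    intro ω hω
    simp only [Set.mem_setOf_eq] at hω ⊢
    rw [hΞ]
    simp only [Set.mem_setOf_eq]
    rw [hTp]
    set y := Y ω with hy
    -- each inner inf is nonneg, so the outer set is bounded below by 0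
    have hbdd : ∀ M : ℳ, BddBelow
        ({a | a ∈ Set.Ioo (0:ℝ) 1 ∧ Tt y (τ₀, M) ∈ B a} ∪ {1}) := by
      intro M
      refine ⟨0, ?_⟩
      rintro x (⟨⟨hx, _⟩, _⟩ | hx)
      · exact hx.le
      · simp only [Set.mem_singleton_iff] at hx; rw [hx]; norm_num
    have houtbdd : BddBelow {r | ∃ M : ℳ,
        r = sInf ({a | a ∈ Set.Ioo (0:ℝ) 1 ∧ Tt y (τ₀, M) ∈ B a} ∪ {1})} := by
      refine ⟨0, ?_⟩
      rintro r ⟨M, rfl⟩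
      refine le_csInf ⟨1, Or.inr rfl⟩ ?_
      rintro b (⟨⟨hb, _⟩, _⟩ | hb)
      · exact hb.le
      · simp only [Set.mem_singleton_iff] at hb; rw [hb]; norm_num
    have h1 : sInf ({a | a ∈ Set.Ioo (0:ℝ) 1 ∧ Tt y (τ₀, M₀) ∈ B a} ∪ {1}) ≤ α :=
      csInf_le (hbdd M₀) (Or.inl ⟨hα, hω⟩)
    have h2 : Tp y τ₀ ≤ sInf ({a | a ∈ Set.Ioo (0:ℝ) 1 ∧ Tt y (τ₀, M₀) ∈ B a} ∪ {1}) := by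
      rw [hTp]
      exact csInf_le houtbdd ⟨M₀, rfl⟩
    calc sInf {r | ∃ M : ℳ,
        r = sInf ({a | a ∈ Set.Ioo (0:ℝ) 1 ∧ Tt y (τ₀, M) ∈ B a} ∪ {1})}
        ≤ sInf ({a | a ∈ Set.Ioo (0:ℝ) 1 ∧ Tt y (τ₀, M₀) ∈ B a} ∪ {1}) :=
          csInf_le houtbdd ⟨M₀, rfl⟩
      _ ≤ α := h1
  exact le_trans (hcov α hα) (measure_mono hsub)
end

section
/- Key inequality in the proof of Theorem 5 (validity of the discrete probability-mass p-value). Let X be a random variable taking values in a countable set 𝒯 with probability mass function P(x) = ℙ(X = x). Define T(x) = Σ_{x̄ ∈ 𝒯 : P(x̄) > P(x)} P(x̄), the total probability mass of all values strictly more probable than x. Then for every α ∈ [0,1], ℙ(T(X) ≤ α) ≥ α. -/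
/-!
Write `G t = ℙ (t < P X)` for the tail function of the real random variable `P X`, so that
`T x = G (P x)`. The event `{G (P X) ≤ α}` is the preimage under `P X` of the upper set
`U = {t | G t ≤ α}`, and every upper set of `ℝ` is the intersection of the rays `(t, ∞)`, `t ∉ U`.
Continuity from above gives `ℙ (P X ∈ U) = ⨅ t ∉ U, G t`, which is `≥ α` because `G t > α` off `U`.
-/

open Set

namespace MeasureTheory

variable {Ω : Type*} [MeasurableSpace Ω] {μ : Measure Ω} [IsFiniteMeasure μ]

theorem measure_preimage_isUpperSet {f : Ω → ℝ} (hf : Measurable f) {U : Set ℝ}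
    (hU : IsUpperSet U) (hUc : Uᶜ.Nonempty) :
    μ (f ⁻¹' U) = ⨅ t : ↥Uᶜ, μ {ω | (t : ℝ) < f ω} := by
  -- `Uᶜ` is order-connected, so `atTop` on it is countably generated
  have : (Uᶜ).OrdConnected := hU.compl.ordConnected
  have : Nonempty ↥Uᶜ := hUc.to_subtype
  have hpre : f ⁻¹' U = ⋂ t : ↥Uᶜ, {ω | (t : ℝ) < f ω} := by
    ext ω
    simp only [mem_preimage, mem_iInter, mem_ofPred_eq, Subtype.forall, mem_compl_iff]
    refine ⟨fun hω t ht => lt_of_not_ge fun hle => ht (hU hle hω), fun h => ?_⟩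
    by_contra hω
    exact lt_irrefl _ (h _ hω)
  rw [hpre]
  refine Antitone.measure_iInter
    (fun s t hst _ hω => lt_of_le_of_lt (show (s : ℝ) ≤ t from hst) hω) (fun t => ?_)
    ⟨Classical.arbitrary _, measure_ne_top μ _⟩
  exact (measurableSet_lt measurable_const hf).nullMeasurableSet

theorem le_measure_setOf_measure_lt_le {f : Ω → ℝ} (hf : Measurable f) {α : ENNReal}
    (hα : α ≤ μ univ) : α ≤ μ {ω | μ {ω' | f ω < f ω'} ≤ α} := by
  set U : Set ℝ := {t | μ {ω' | t < f ω'} ≤ α}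
  have hU : IsUpperSet U := fun s t hst hs =>
    (measure_mono fun ω hω => lt_of_le_of_lt hst hω).trans hs
  change α ≤ μ (f ⁻¹' U)
  rcases Uᶜ.eq_empty_or_nonempty with hUc | hUc
  · rwa [compl_empty_iff.mp hUc, preimage_univ]
  · rw [measure_preimage_isUpperSet hf hU hUc]
    exact le_iInf fun t => le_of_not_ge t.2

theorem tsum_toReal_measure_preimage_singleton {𝒯 : Type*} [MeasurableSpace 𝒯] [Countable 𝒯]
    [MeasurableSingletonClass 𝒯] {X : Ω → 𝒯} (hX : Measurable X) (s : Set 𝒯) :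
    ∑' y : s, (μ (X ⁻¹' {(y : 𝒯)})).toReal = (μ (X ⁻¹' s)).toReal := by
  rw [← ENNReal.tsum_toReal_eq fun _ => measure_ne_top μ _,
    tsum_measure_preimage_singleton s.to_countable fun y _ => hX (measurableSet_singleton y)]

end MeasureTheory

open MeasureTheory

/-- Key inequality in the proof of Theorem 5: for a discrete random variable `X` on a
countable set with pmf `P`, the statistic `T(x) = Σ_{xb : P(xb) > P(x)} P(xb)` satisfies
`ℙ(T(X) ≤ α) ≥ α` for every `α ∈ [0,1]`. -/
theorem discrete_pvalue_valid
    {Ω 𝒯 : Type*} [MeasurableSpace Ω] [MeasurableSpace 𝒯]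
    [Countable 𝒯] [MeasurableSingletonClass 𝒯]
    (ℙ : Measure Ω) [IsProbabilityMeasure ℙ]
    (X : Ω → 𝒯) (hX : Measurable X)
    (P : 𝒯 → ℝ) (hP : ∀ x, P x = (ℙ (X ⁻¹' {x})).toReal)
    (T : 𝒯 → ℝ)
    (hT : ∀ x, T x = ∑' xb : {y : 𝒯 // P x < P y}, P xb.1)
    (α : ℝ) (hα : α ∈ Set.Icc (0:ℝ) 1) :
    ENNReal.ofReal α ≤ ℙ {ω | T (X ω) ≤ α} := by
  have hPX : Measurable fun ω => P (X ω) := (measurable_of_countable P).comp hX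
  have hT_eq : ∀ x, T x = (ℙ {ω | P x < P (X ω)}).toReal := fun x =>
    (hT x).trans <| (tsum_congr fun y : {y // P x < P y} => hP y).trans <|
      tsum_toReal_measure_preimage_singleton hX {y | P x < P y}
  have hT_le : ∀ ω, T (X ω) ≤ α ↔ ℙ {ω' | P (X ω) < P (X ω')} ≤ ENNReal.ofReal α := fun ω => by
    rw [hT_eq, ENNReal.le_ofReal_iff_toReal_le (measure_ne_top ℙ _) hα.1]
  simp_rw [hT_le]
  refine le_measure_setOf_measure_lt_le hPX ?_
  rw [measure_univ]
  exact ENNReal.ofReal_le_one.mpr hα.2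
end
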